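/- Let λ > 0 and let P₀, P₁, Q₀, Q₁ be four distinct points of ℤ², each of norm λ, all lying on a circular arc of {|x| = λ} of length r. Then |P₀ - Q₀| · |P₁ - Q₁| · r > c·λ for some absolute constant c > 0. -/

import Mathlib

/-! For lattice chords `u = P₀ - Q₀` and `v = P₁ - Q₁` of the circle, `|det (u, v)| = |u| |v| |sin α|`
with `α` the angle between the chords, and `|α|` is at most the angular width `r / λ` of the arc.
If `u` and `v` are not parallel, `det (u, v)` is a nonzero integer, whence `λ ≤ |u| |v| r`.
If they are parallel, run the same argument for `u` and `P₀ - P₁`, and for `v` and `P₁ - P₀`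
(three distinct points of a circle are never collinear): the chord `P₀ P₁` is at most `π / 2`
times the longer of `u`, `v`. Arcs of angle at least `π` are trivial since `|u|, |v| ≥ 1`. -/

noncomputable def toC (p : ℤ × ℤ) : ℂ := (p.1 : ℂ) + (p.2 : ℂ) * Complex.I

open Complex ComplexConjugate
open scoped Real

def cross (p q : ℤ × ℤ) : ℤ := p.1 * q.2 - p.2 * q.1

lemma toC_sub (p q : ℤ × ℤ) : toC (p - q) = toC p - toC q := by
  simp only [toC, Prod.fst_sub, Prod.snd_sub, Int.cast_sub]
  ring

lemma toC_injective : Function.Injective toC := by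
  intro p q h
  simpa [toC, Complex.ext_iff, Prod.ext_iff] using h

lemma one_le_norm_toC {p : ℤ × ℤ} (hp : p ≠ 0) : 1 ≤ ‖toC p‖ := by
  have hre : (toC p).re = p.1 := by simp [toC]
  have him : (toC p).im = p.2 := by simp [toC]
  by_cases h1 : p.1 = 0
  · have h2 : p.2 ≠ 0 := fun h2 => hp (Prod.ext h1 h2)
    calc (1 : ℝ) ≤ |(p.2 : ℝ)| := by exact_mod_cast Int.one_le_abs h2
      _ ≤ ‖toC p‖ := him ▸ abs_im_le_norm _
  · calc (1 : ℝ) ≤ |(p.1 : ℝ)| := by exact_mod_cast Int.one_le_abs h1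
      _ ≤ ‖toC p‖ := hre ▸ abs_re_le_norm _

lemma im_conj_toC_mul_toC (p q : ℤ × ℤ) : (conj (toC p) * toC q).im = cross p q := by
  simp only [toC, cross, Int.cast_sub, Int.cast_mul, mul_im, mul_re, conj_re, conj_im, add_re,
    add_im, intCast_re, intCast_im, I_re, I_im]
  ring

lemma exp_mul_I_sub_exp_mul_I (a b : ℝ) :
    exp (a * I) - exp (b * I) = 2 * I * Real.sin ((a - b) / 2) * exp (((a + b) / 2 : ℝ) * I) := by
  have ha : (a : ℂ) * I = ((a + b) / 2 : ℝ) * I + ((a - b) / 2 : ℝ) * I := by push_cast; ring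
  have hb : (b : ℂ) * I = ((a + b) / 2 : ℝ) * I + -(((a - b) / 2 : ℝ) * I) := by push_cast; ring
  rw [ha, hb, exp_add, exp_add, ofReal_sin, Complex.sin, neg_mul]
  set m := exp (((a + b) / 2 : ℝ) * I)
  set h := ((a - b) / 2 : ℝ)
  linear_combination m * (exp (h * I) - exp (-(h * I))) * I_sq

lemma norm_exp_mul_I_sub_exp_mul_I (a b : ℝ) :
    ‖exp (a * I) - exp (b * I)‖ = 2 * |Real.sin ((a - b) / 2)| := by
  rw [exp_mul_I_sub_exp_mul_I]
  simp only [norm_mul, Complex.norm_two, norm_I, norm_real, Real.norm_eq_abs, norm_exp_ofReal_mul_I]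
  ring

lemma im_conj_sub_mul_sub (a b c d : ℝ) :
    (conj (exp (a * I) - exp (b * I)) * (exp (c * I) - exp (d * I))).im
      = 4 * Real.sin ((a - b) / 2) * Real.sin ((c - d) / 2) * Real.sin ((c + d - a - b) / 2) := by
  rw [exp_mul_I_sub_exp_mul_I, exp_mul_I_sub_exp_mul_I]
  rw [show (c + d - a - b) / 2 = (c + d) / 2 - (a + b) / 2 by ring, Real.sin_sub]
  simp only [mul_im, mul_re, conj_re, conj_im, I_re, I_im, ofReal_re, ofReal_im, re_ofNat,
    im_ofNat, exp_ofReal_mul_I_re, exp_ofReal_mul_I_im]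
  ring

lemma norm_exp_mul_I_sub_exp_mul_I_le (a b : ℝ) : ‖exp (a * I) - exp (b * I)‖ ≤ |a - b| := by
  rw [norm_exp_mul_I_sub_exp_mul_I]
  calc 2 * |Real.sin ((a - b) / 2)| ≤ 2 * |(a - b) / 2| :=
        mul_le_mul_of_nonneg_left Real.abs_sin_le_abs zero_le_two
    _ = |a - b| := by rw [abs_div, abs_two]; ring

lemma abs_sub_le_pi_div_two_mul_norm {a b : ℝ} (h : |a - b| ≤ π) :
    |a - b| ≤ π / 2 * ‖exp (a * I) - exp (b * I)‖ := by
  have hx : |(a - b) / 2| ≤ π / 2 := by rw [abs_div, abs_two]; linarith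
  rw [norm_exp_mul_I_sub_exp_mul_I]
  calc |a - b| = π / 2 * (2 * (2 / π * |(a - b) / 2|)) := by
        rw [abs_div, abs_two]; field_simp
    _ ≤ _ := by gcongr; exact Real.mul_abs_le_abs_sin hx

/-- `a + b = c + d` says that the chords from angle `a` to `b` and from `c` to `d` are parallel. -/
lemma norm_exp_sub_le_of_add_eq {a b c d : ℝ} (hpar : a + b = c + d) (hab : |a - b| ≤ π)
    (hcd : |c - d| ≤ π) :
    ‖exp (a * I) - exp (c * I)‖
      ≤ π / 2 * max ‖exp (a * I) - exp (b * I)‖ ‖exp (c * I) - exp (d * I)‖ := by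
  have h1 := abs_sub_le_pi_div_two_mul_norm hab
  have h2 := abs_sub_le_pi_div_two_mul_norm hcd
  have hac : |a - c| ≤ (|a - b| + |c - d|) / 2 := by
    rw [show a - c = ((a - b) - (c - d)) / 2 by linarith, abs_div, abs_two]
    gcongr
    exact abs_sub _ _
  calc ‖exp (a * I) - exp (c * I)‖ ≤ |a - c| := norm_exp_mul_I_sub_exp_mul_I_le a c
    _ ≤ max |a - b| |c - d| := by
      linarith [le_max_left |a - b| |c - d|, le_max_right |a - b| |c - d|]
    _ ≤ _ := by rw [mul_max_of_nonneg _ _ (by positivity)]; exact max_le_max h1 h2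

section Arc

variable {lam θ₀ ψ a b c d : ℝ} {P Q R S : ℤ × ℤ}

lemma toC_sub_toC (hP : toC P = lam * exp (a * I)) (hQ : toC Q = lam * exp (b * I)) :
    toC P - toC Q = lam * (exp (a * I) - exp (b * I)) := by
  rw [hP, hQ, mul_sub]

lemma abs_cross_sub_sub (hP : toC P = lam * exp (a * I)) (hQ : toC Q = lam * exp (b * I))
    (hR : toC R = lam * exp (c * I)) (hS : toC S = lam * exp (d * I)) :
    |(cross (P - Q) (R - S) : ℝ)|
      = ‖toC P - toC Q‖ * ‖toC R - toC S‖ * |Real.sin ((c + d - a - b) / 2)| := by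
  have hcross : (cross (P - Q) (R - S) : ℝ)
      = lam ^ 2 * (conj (exp (a * I) - exp (b * I)) * (exp (c * I) - exp (d * I))).im := by
    rw [← im_conj_toC_mul_toC, toC_sub, toC_sub, toC_sub_toC hP hQ, toC_sub_toC hR hS, map_mul,
      conj_ofReal, mul_mul_mul_comm, ← ofReal_mul, im_ofReal_mul, sq]
  rw [hcross, im_conj_sub_mul_sub, toC_sub_toC hP hQ, toC_sub_toC hR hS, norm_mul, norm_mul,
    norm_real, Real.norm_eq_abs, norm_exp_mul_I_sub_exp_mul_I, norm_exp_mul_I_sub_exp_mul_I]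
  simp only [abs_mul, abs_pow, abs_of_pos (four_pos (α := ℝ))]
  ring

lemma norm_toC_sub_ne_zero (hPQ : P ≠ Q) : ‖toC P - toC Q‖ ≠ 0 :=
  norm_ne_zero_iff.2 (sub_ne_zero.2 (toC_injective.ne hPQ))

lemma sin_half_sub_ne_zero (hP : toC P = lam * exp (a * I)) (hQ : toC Q = lam * exp (b * I))
    (hPQ : P ≠ Q) : Real.sin ((a - b) / 2) ≠ 0 := by
  have h := norm_toC_sub_ne_zero hPQ
  rw [toC_sub_toC hP hQ, norm_mul, norm_exp_mul_I_sub_exp_mul_I] at h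
  exact fun h0 => h (by rw [h0, abs_zero, mul_zero, mul_zero])

lemma cross_sub_sub_ne_zero (hP : toC P = lam * exp (a * I)) (hQ : toC Q = lam * exp (b * I))
    (hR : toC R = lam * exp (c * I)) (hPQ : P ≠ Q) (hPR : P ≠ R) (hQR : Q ≠ R) :
    cross (P - Q) (P - R) ≠ 0 := by
  intro h
  have h0 := abs_cross_sub_sub hP hQ hP hR
  rw [h, Int.cast_zero, abs_zero, show (a + c - a - b) / 2 = (c - b) / 2 by ring] at h0
  exact mul_ne_zero (mul_ne_zero (norm_toC_sub_ne_zero hPQ) (norm_toC_sub_ne_zero hPR))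
    (abs_ne_zero.2 (sin_half_sub_ne_zero hR hQ hQR.symm)) h0.symm

lemma one_le_mul_norm_mul_of_cross_ne_zero (ha : a ∈ Set.Icc θ₀ (θ₀ + ψ))
    (hb : b ∈ Set.Icc θ₀ (θ₀ + ψ)) (hc : c ∈ Set.Icc θ₀ (θ₀ + ψ)) (hd : d ∈ Set.Icc θ₀ (θ₀ + ψ))
    (hP : toC P = lam * exp (a * I)) (hQ : toC Q = lam * exp (b * I))
    (hR : toC R = lam * exp (c * I)) (hS : toC S = lam * exp (d * I)) (h : cross (P - Q) (R - S) ≠ 0) :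
    1 ≤ ‖toC P - toC Q‖ * ‖toC R - toC S‖ * ψ := by
  have h1 : (1 : ℝ) ≤ |(cross (P - Q) (R - S) : ℝ)| := by exact_mod_cast Int.one_le_abs h
  have hsin : |Real.sin ((c + d - a - b) / 2)| ≤ ψ :=
    Real.abs_sin_le_abs.trans <| abs_le.2
      ⟨by linarith [ha.2, hb.2, hc.1, hd.1], by linarith [ha.1, hb.1, hc.2, hd.2]⟩
  rw [abs_cross_sub_sub hP hQ hR hS] at h1
  exact h1.trans (by gcongr)

lemma add_eq_add_of_cross_eq_zero (hψ : ψ < π) (ha : a ∈ Set.Icc θ₀ (θ₀ + ψ))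
    (hb : b ∈ Set.Icc θ₀ (θ₀ + ψ)) (hc : c ∈ Set.Icc θ₀ (θ₀ + ψ)) (hd : d ∈ Set.Icc θ₀ (θ₀ + ψ))
    (hP : toC P = lam * exp (a * I)) (hQ : toC Q = lam * exp (b * I))
    (hR : toC R = lam * exp (c * I)) (hS : toC S = lam * exp (d * I)) (hPQ : P ≠ Q) (hRS : R ≠ S)
    (h : cross (P - Q) (R - S) = 0) : a + b = c + d := by
  have h0 := abs_cross_sub_sub hP hQ hR hS
  rw [h, Int.cast_zero, abs_zero, eq_comm, mul_eq_zero, abs_eq_zero] at h0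
  have hsin := h0.resolve_left (mul_ne_zero (norm_toC_sub_ne_zero hPQ) (norm_toC_sub_ne_zero hRS))
  rw [Real.sin_eq_zero_iff_of_lt_of_lt (by linarith [ha.2, hb.2, hc.1, hd.1])
    (by linarith [ha.1, hb.1, hc.2, hd.2])] at hsin
  linarith

theorem two_div_pi_le_mul_norm_mul (hψ : ψ < π) (ha : a ∈ Set.Icc θ₀ (θ₀ + ψ))
    (hb : b ∈ Set.Icc θ₀ (θ₀ + ψ)) (hc : c ∈ Set.Icc θ₀ (θ₀ + ψ)) (hd : d ∈ Set.Icc θ₀ (θ₀ + ψ))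
    (hP : toC P = lam * exp (a * I)) (hQ : toC Q = lam * exp (b * I))
    (hR : toC R = lam * exp (c * I)) (hS : toC S = lam * exp (d * I))
    (hPR : P ≠ R) (hPQ : P ≠ Q) (hPS : P ≠ S) (hRQ : R ≠ Q) (hRS : R ≠ S) :
    2 / π ≤ ‖toC P - toC Q‖ * ‖toC R - toC S‖ * ψ := by
  rw [div_le_iff₀ Real.pi_pos]
  rcases ne_or_eq (cross (P - Q) (R - S)) 0 with hcross | hcross
  · calc 2 ≤ 1 * π := by linarith [Real.pi_gt_three]
      _ ≤ _ := by gcongr; exact one_le_mul_norm_mul_of_cross_ne_zero ha hb hc hd hP hQ hR hS hcross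
  have hpar := add_eq_add_of_cross_eq_zero hψ ha hb hc hd hP hQ hR hS hPQ hRS hcross
  have hu := one_le_mul_norm_mul_of_cross_ne_zero ha hb ha hc hP hQ hP hR
    (cross_sub_sub_ne_zero hP hQ hR hPQ hPR hRQ.symm)
  have hv := one_le_mul_norm_mul_of_cross_ne_zero hc hd hc ha hR hS hR hP
    (cross_sub_sub_ne_zero hR hS hP hRS hPR.symm hPS.symm)
  rw [norm_sub_rev (toC R) (toC P)] at hv
  have hw : ‖toC P - toC R‖ ≤ π / 2 * max ‖toC P - toC Q‖ ‖toC R - toC S‖ := by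
    rw [toC_sub_toC hP hR, toC_sub_toC hP hQ, toC_sub_toC hR hS, norm_mul, norm_mul, norm_mul,
      ← mul_max_of_nonneg _ _ (norm_nonneg _), mul_left_comm]
    refine mul_le_mul_of_nonneg_left (norm_exp_sub_le_of_add_eq hpar ?_ ?_) (norm_nonneg _)
    · exact abs_le.2 ⟨by linarith [ha.1, hb.2], by linarith [ha.2, hb.1]⟩
    · exact abs_le.2 ⟨by linarith [hc.1, hd.2], by linarith [hc.2, hd.1]⟩
  have hψ0 : 0 ≤ ψ := by linarith [ha.1, ha.2]
  have key : 1 ≤ π / 2 * (‖toC P - toC Q‖ * ‖toC R - toC S‖ * ψ) := by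
    rcases le_total ‖toC P - toC Q‖ ‖toC R - toC S‖ with h | h
    · rw [max_eq_right h] at hw
      calc 1 ≤ ‖toC P - toC Q‖ * ‖toC P - toC R‖ * ψ := hu
        _ ≤ ‖toC P - toC Q‖ * (π / 2 * ‖toC R - toC S‖) * ψ := by gcongr
        _ = _ := by ring
    · rw [max_eq_left h] at hw
      calc 1 ≤ ‖toC R - toC S‖ * ‖toC P - toC R‖ * ψ := hv
        _ ≤ ‖toC R - toC S‖ * (π / 2 * ‖toC P - toC Q‖) * ψ := by gcongr
        _ = _ := by ring
  linarith

end Arc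

/-- Four distinct lattice points on an arc of length `r` of the circle of radius `λ`
satisfy `|P₀ - Q₀| · |P₁ - Q₁| · r > c·λ` for an absolute constant `c > 0`. -/
theorem stmt_1 :
    ∃ c : ℝ, 0 < c ∧
      ∀ (lam r θ₀ : ℝ), 0 < lam → 0 < r →
        ∀ (P₀ P₁ Q₀ Q₁ : ℤ × ℤ),
          P₀ ≠ P₁ → P₀ ≠ Q₀ → P₀ ≠ Q₁ → P₁ ≠ Q₀ → P₁ ≠ Q₁ → Q₀ ≠ Q₁ →
          (∀ P ∈ ({P₀, P₁, Q₀, Q₁} : Set (ℤ × ℤ)),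
            ∃ t ∈ Set.Icc θ₀ (θ₀ + r / lam),
              toC P = lam * Complex.exp (t * Complex.I)) →
          c * lam <
            ‖toC P₀ - toC Q₀‖ * ‖toC P₁ - toC Q₁‖ * r := by
  refine ⟨1 / 2, one_half_pos, ?_⟩
  intro lam r θ₀ hlam hr P₀ P₁ Q₀ Q₁ hP₀P₁ hP₀Q₀ hP₀Q₁ hP₁Q₀ hP₁Q₁ _ harc
  suffices h : 2 / π * lam ≤ ‖toC P₀ - toC Q₀‖ * ‖toC P₁ - toC Q₁‖ * r by
    have : 1 / 2 < 2 / π := by rw [lt_div_iff₀ Real.pi_pos]; linarith [Real.pi_lt_four]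
    exact (mul_lt_mul_of_pos_right this hlam).trans_le h
  rcases lt_or_ge (r / lam) π with hψ | hψ
  · obtain ⟨a, ha, hP₀⟩ := harc P₀ (by simp)
    obtain ⟨b, hb, hQ₀⟩ := harc Q₀ (by simp)
    obtain ⟨c, hc, hP₁⟩ := harc P₁ (by simp)
    obtain ⟨d, hd, hQ₁⟩ := harc Q₁ (by simp)
    have h := two_div_pi_le_mul_norm_mul hψ ha hb hc hd hP₀ hQ₀ hP₁ hQ₁
      hP₀P₁ hP₀Q₀ hP₀Q₁ hP₁Q₀ hP₁Q₁
    rwa [mul_div_assoc', le_div_iff₀ hlam] at h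
  · have hu : 1 ≤ ‖toC P₀ - toC Q₀‖ := toC_sub P₀ Q₀ ▸ one_le_norm_toC (sub_ne_zero.2 hP₀Q₀)
    have hv : 1 ≤ ‖toC P₁ - toC Q₁‖ := toC_sub P₁ Q₁ ▸ one_le_norm_toC (sub_ne_zero.2 hP₁Q₁)
    have h2π : 2 / π ≤ π := by
      rw [div_le_iff₀ Real.pi_pos]; nlinarith [Real.pi_gt_three]
    rw [le_div_iff₀ hlam] at hψ
    calc 2 / π * lam ≤ π * lam := by gcongr
      _ ≤ 1 * 1 * r := by linarith
      _ ≤ _ := by gcongr
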